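/- arXiv:2108.12107 — 2 statements merged into one kernel-verified Lean document; each statement's English description precedes it below -/
import Mathlib

section
/- Let d be a positive natural number, let 0 < m ≤ M be real numbers, and let c : Fin d → ℝ satisfy m ≤ c_j ≤ M for all j. Let x, y : ℝ → EuclideanSpace ℝ (Fin d) be twice-differentiable curves satisfying coordinatewise x''(t)_j = -2 c_j x(t)_j and y''(t)_j = -2 c_j y(t)_j for all t and j, with equal initial velocities x'(0) = y'(0). Then for T = (π/2)·(1/√(2M)), we have coordinatewise x(T)_j − y(T)_j = cos(√(2 c_j) T)·(x(0)_j − y(0)_j), and consequently ‖x(T) − y(T)‖ ≤ (1 − (π²/32)·(m/M))·‖x(0) − y(0)‖. -/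
/-!
With equal initial velocities, each coordinate `u` of the difference of the two solutions solves
`u'' = -ω² u`, `u'(0) = 0` with `ω = √(2 c_j)`, so `u t = cos (ω t) * u 0`; uniqueness comes from
conservation of the energy `u'² + ω² u²`. At time `T` the arguments `s = √(2 c_j) T` satisfy
`s² = (π²/4)(c_j/M)`, so they lie in `[0, π/2]` with `s² ≥ (π²/4)(m/M)`, where
`0 ≤ cos s ≤ 1 - s²/8 ≤ 1 - (π²/32)(m/M)`. Every coordinate of the difference therefore shrinks by
this factor, and so does its Euclidean norm.
-/

open Real

namespace HarmonicOscillator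

variable {ω : ℝ} {u v : ℝ → ℝ}

theorem eq_zero_of_initial_eq_zero (hu : ∀ t, HasDerivAt u (v t) t)
    (hv : ∀ t, HasDerivAt v (-ω ^ 2 * u t) t) (hu0 : u 0 = 0) (hv0 : v 0 = 0) (t : ℝ) :
    u t = 0 := by
  let E : ℝ → ℝ := fun s => v s ^ 2 + ω ^ 2 * u s ^ 2
  have hE : ∀ s, HasDerivAt E 0 s := fun s =>
    (((hv s).pow 2).add (((hu s).pow 2).const_mul (ω ^ 2))).congr_deriv (by ring)
  have hE_zero : ∀ s, E s = 0 := fun s => by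
    rw [is_const_of_deriv_eq_zero (fun s => (hE s).differentiableAt) (fun s => (hE s).deriv) s 0]
    simp [E, hu0, hv0]
  have hv_zero : ∀ s, v s = 0 := fun s => by
    have := hE_zero s
    nlinarith [sq_nonneg (v s), sq_nonneg (ω * u s)]
  rw [← hu0]
  exact is_const_of_deriv_eq_zero (fun s => (hu s).differentiableAt)
    (fun s => by rw [(hu s).deriv, hv_zero]) t 0

theorem eq_cos_mul (hu : ∀ t, HasDerivAt u (v t) t)
    (hv : ∀ t, HasDerivAt v (-ω ^ 2 * u t) t) (hv0 : v 0 = 0) (t : ℝ) :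
    u t = cos (ω * t) * u 0 := by
  have hω : ∀ s, HasDerivAt (fun r => ω * r) ω s := fun s =>
    ((hasDerivAt_id' s).const_mul ω).congr_deriv (mul_one ω)
  have hcos : ∀ s, HasDerivAt (fun r => cos (ω * r) * u 0) (-(ω * sin (ω * s) * u 0)) s :=
    fun s => ((hω s).cos.mul_const (u 0)).congr_deriv (by ring)
  have hsin : ∀ s, HasDerivAt (fun r => -(ω * sin (ω * r) * u 0))
      (-ω ^ 2 * (cos (ω * s) * u 0)) s := fun s =>
    (((hω s).sin.const_mul ω).mul_const (u 0)).neg.congr_deriv (by ring)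
  -- `u - cos (ω ·) * u 0` solves the same equation with zero initial data.
  have := eq_zero_of_initial_eq_zero (u := fun r => u r - cos (ω * r) * u 0)
    (fun s => (hu s).sub (hcos s))
    (fun s => ((hv s).sub (hsin s)).congr_deriv (by ring)) (by simp) (by simp [hv0]) t
  exact sub_eq_zero.mp this

end HarmonicOscillator

theorem EuclideanSpace.norm_le_mul_of_forall_norm_apply_le {𝕜 ι : Type*} [RCLike 𝕜] [Fintype ι]
    {u v : EuclideanSpace 𝕜 ι} {K : ℝ} (hK : 0 ≤ K) (h : ∀ j, ‖v j‖ ≤ K * ‖u j‖) :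
    ‖v‖ ≤ K * ‖u‖ := by
  refine le_of_sq_le_sq ?_ (by positivity)
  rw [mul_pow, EuclideanSpace.norm_sq_eq, EuclideanSpace.norm_sq_eq, Finset.mul_sum]
  gcongr with j
  rw [← mul_pow]
  exact pow_le_pow_left₀ (norm_nonneg _) (h j) 2

theorem Real.cos_le_one_sub_sq_div_eight {s : ℝ} (hs : |s| ≤ π) : cos s ≤ 1 - s ^ 2 / 8 := by
  have hπ : π ^ 2 ≤ 16 := by nlinarith [pi_le_four, pi_pos]
  have : s ^ 2 / 8 ≤ 2 / π ^ 2 * s ^ 2 := by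
    rw [div_mul_eq_mul_div, le_div_iff₀ (by positivity)]
    nlinarith [mul_le_mul_of_nonneg_left hπ (sq_nonneg s)]
  linarith [cos_le_one_sub_mul_cos_sq hs]

theorem abs_cos_sqrt_mul_le {m c M : ℝ} (hm : 0 < m) (hmc : m ≤ c) (hcM : c ≤ M) :
    |cos (√(2 * c) * (π / 2 * (1 / √(2 * M))))| ≤ 1 - π ^ 2 / 32 * (m / M) := by
  set s := √(2 * c) * (π / 2 * (1 / √(2 * M)))
  have hM : 0 < M := by linarith
  have hs_nonneg : 0 ≤ s := by positivity
  have hs_sq : s ^ 2 = π ^ 2 / 4 * (c / M) := by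
    rw [mul_pow, mul_pow, div_pow, sq_sqrt (by linarith), one_div, inv_pow, sq_sqrt (by linarith)]
    field_simp
    ring
  have hs_le : s ≤ π / 2 := by
    refine le_of_sq_le_sq ?_ (by positivity)
    rw [hs_sq, div_pow]
    have : c / M ≤ 1 := (div_le_one hM).mpr hcM
    nlinarith [pi_pos]
  have hcos_nonneg : 0 ≤ cos s := cos_nonneg_of_mem_Icc ⟨by linarith [pi_pos], hs_le⟩
  have hcos_le : cos s ≤ 1 - s ^ 2 / 8 :=
    cos_le_one_sub_sq_div_eight (by rw [abs_of_nonneg hs_nonneg]; linarith [pi_pos])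
  have hs_sq_ge : π ^ 2 / 4 * (m / M) ≤ s ^ 2 := by
    rw [hs_sq]; gcongr
  rw [abs_of_nonneg hcos_nonneg]
  linarith

theorem harmonic_oscillator_coupling_contraction_general (d : ℕ)
    (m M : ℝ) (hm : 0 < m) (hmM : m ≤ M)
    (c : Fin d → ℝ) (hc : ∀ j, m ≤ c j ∧ c j ≤ M)
    (x y x' y' : ℝ → EuclideanSpace ℝ (Fin d))
    (hx1 : ∀ t, HasDerivAt x (x' t) t)
    (hy1 : ∀ t, HasDerivAt y (y' t) t)
    (hx2 : ∀ t j, HasDerivAt (fun s => x' s j) (-2 * c j * x t j) t)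
    (hy2 : ∀ t j, HasDerivAt (fun s => y' s j) (-2 * c j * y t j) t)
    (h0 : x' 0 = y' 0)
    (T : ℝ) (hT : T = π / 2 * (1 / Real.sqrt (2 * M))) :
    (∀ j, x T j - y T j = Real.cos (Real.sqrt (2 * c j) * T) * (x 0 j - y 0 j)) ∧
    ‖x T - y T‖ ≤ (1 - π ^ 2 / 32 * (m / M)) * ‖x 0 - y 0‖ := by
  have hcoord (j : Fin d) (t : ℝ) :
      x t j - y t j = cos (√(2 * c j) * t) * (x 0 j - y 0 j) := by
    have hxj : ∀ t, HasDerivAt (fun s => x s j) (x' t j) t := fun t =>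
      (PiLp.hasFDerivAt_apply 2 (x t) j).comp_hasDerivAt t (hx1 t)
    have hyj : ∀ t, HasDerivAt (fun s => y s j) (y' t j) t := fun t =>
      (PiLp.hasFDerivAt_apply 2 (y t) j).comp_hasDerivAt t (hy1 t)
    refine HarmonicOscillator.eq_cos_mul (u := fun s => x s j - y s j)
      (fun t => (hxj t).sub (hyj t))
      (fun t => ((hx2 t j).sub (hy2 t j)).congr_deriv ?_) (by simp [h0]) t
    rw [sq_sqrt (by linarith [hc j])]
    ring
  have hK : 0 ≤ 1 - π ^ 2 / 32 * (m / M) := by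
    have : m / M ≤ 1 := (div_le_one (hm.trans_le hmM)).mpr hmM
    nlinarith [pi_le_four, pi_pos, div_pos hm (hm.trans_le hmM)]
  refine ⟨fun j => hcoord j T,
    EuclideanSpace.norm_le_mul_of_forall_norm_apply_le hK fun j => ?_⟩
  rw [PiLp.sub_apply, PiLp.sub_apply, hcoord j T, norm_mul, norm_eq_abs, hT]
  gcongr
  exact abs_cos_sqrt_mul_le hm (hc j).1 (hc j).2

/-- Coupling contraction for the general harmonic oscillator: if `x` and `y`
satisfy `x''(t)_j = -2 c_j x(t)_j`, `y''(t)_j = -2 c_j y(t)_j` coordinatewise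
with `m ≤ c_j ≤ M` and equal initial velocities, then at time
`T = (π/2)(1/√(2M))` each coordinate of the difference equals
`cos (√(2 c_j) T)` times its initial value, and the distance contracts by a
factor `1 - (π²/32)(m/M)`. -/
theorem harmonic_oscillator_coupling_contraction (d : ℕ) (hd : 0 < d)
    (m M : ℝ) (hm : 0 < m) (hmM : m ≤ M)
    (c : Fin d → ℝ) (hc : ∀ j, m ≤ c j ∧ c j ≤ M)
    (x y x' y' : ℝ → EuclideanSpace ℝ (Fin d))
    (hx1 : ∀ t, HasDerivAt x (x' t) t)
    (hy1 : ∀ t, HasDerivAt y (y' t) t)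
    (hx2 : ∀ t j, HasDerivAt (fun s => x' s j) (-2 * c j * x t j) t)
    (hy2 : ∀ t j, HasDerivAt (fun s => y' s j) (-2 * c j * y t j) t)
    (h0 : x' 0 = y' 0)
    (T : ℝ) (hT : T = π / 2 * (1 / Real.sqrt (2 * M))) :
    (∀ j, x T j - y T j = Real.cos (Real.sqrt (2 * c j) * T) * (x 0 j - y 0 j)) ∧
    ‖x T - y T‖ ≤ (1 - π ^ 2 / 32 * (m / M)) * ‖x 0 - y 0‖ :=
  harmonic_oscillator_coupling_contraction_general d m M hm hmM c hc x y x' y' hx1 hy1 hx2 hy2 h0 T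
    hT
end

section
/- Let d be a positive natural number and let f : EuclideanSpace ℝ (Fin d) → ℝ be measurable with 0 < ∫ e^{-f(x)} dx < ∞. Let H(x,v) = f(x) + ‖v‖²/2, and let φ : ℝ^d × ℝ^d → ℝ^d × ℝ^d be a measurable map that preserves the Lebesgue measure on ℝ^d × ℝ^d and satisfies H(φ(x,v)) = H(x,v) for all (x,v). Let π_x be the probability measure on ℝ^d with density proportional to e^{-f}, and let γ_d be the standard Gaussian measure N(0, I_d) on ℝ^d. Then the pushforward of the product measure π_x ⊗ γ_d under φ equals π_x ⊗ γ_d; in particular, the pushforward of π_x ⊗ γ_d under the composition of φ with the projection onto the first (position) coordinate equals π_x. -/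
open MeasureTheory Real
open scoped ENNReal

/-!
The Gibbs measure `π_x ⊗ γ_d` has Lebesgue density `z ↦ C e^{-H z}`, a function of the energy
alone. If `φ` preserves Lebesgue measure and `g ∘ φ = g`, then
`∫_{φ⁻¹ s} g = ∫_{φ⁻¹ s} g ∘ φ = ∫_s g`, so `φ` preserves every measure with such a density.
Projecting to the position coordinate recovers `π_x` because `γ_d` is a probability measure.
-/

theorem MeasureTheory.MeasurePreserving.withDensity_of_comp_eq {α : Type*} [MeasurableSpace α]
    {ν : Measure α} {φ : α → α} (hφ : MeasurePreserving φ ν ν) {g : α → ℝ≥0∞}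
    (hg : Measurable g) (hgφ : ∀ z, g (φ z) = g z) :
    MeasurePreserving φ (ν.withDensity g) (ν.withDensity g) := by
  refine ⟨hφ.measurable, Measure.ext fun s hs => ?_⟩
  rw [Measure.map_apply hφ.measurable hs, withDensity_apply _ hs,
    withDensity_apply _ (hφ.measurable hs), ← hφ.setLIntegral_comp_preimage hs hg]
  simp only [hgφ]

theorem lintegral_ofReal_stdGaussianPDF (V : Type*) [NormedAddCommGroup V]
    [InnerProductSpace ℝ V] [FiniteDimensional ℝ V] [MeasurableSpace V] [BorelSpace V] :
    ∫⁻ v : V, ENNReal.ofReal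
      ((2 * π) ^ (-(Module.finrank ℝ V : ℝ) / 2) * exp (-‖v‖ ^ 2 / 2)) = 1 := by
  have hint : ∫ v : V, exp (-‖v‖ ^ 2 / 2) = (2 * π) ^ ((Module.finrank ℝ V : ℝ) / 2) := by
    have h := GaussianFourier.integral_rexp_neg_mul_sq_norm (V := V) (b := 1 / 2) (by norm_num)
    simpa only [neg_mul, one_div_mul_eq_div, div_div_eq_mul_div, div_one, neg_div,
      mul_comm π 2] using h
  have hintegrable : Integrable (fun v : V => exp (-‖v‖ ^ 2 / 2)) :=
    .of_integral_ne_zero (by rw [hint]; positivity)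
  rw [← ofReal_integral_eq_lintegral_ofReal (hintegrable.const_mul _)
      (.of_forall fun v => by positivity),
    integral_const_mul, hint, ← rpow_add (by positivity), neg_div, neg_add_cancel, rpow_zero,
    ENNReal.ofReal_one]

theorem hmc_preserves_target_general (d : ℕ)
    (f : EuclideanSpace ℝ (Fin d) → ℝ) (hf : Measurable f)
    (Zf : ℝ≥0∞)
    (H : EuclideanSpace ℝ (Fin d) × EuclideanSpace ℝ (Fin d) → ℝ)
    (hH : ∀ x v, H (x, v) = f x + ‖v‖ ^ 2 / 2)
    (φ : EuclideanSpace ℝ (Fin d) × EuclideanSpace ℝ (Fin d) →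
      EuclideanSpace ℝ (Fin d) × EuclideanSpace ℝ (Fin d))
    (hφ : MeasurePreserving φ volume volume)
    (hHφ : ∀ z, H (φ z) = H z)
    (πx : Measure (EuclideanSpace ℝ (Fin d)))
    (hπx : πx = (volume : Measure (EuclideanSpace ℝ (Fin d))).withDensity
      (fun x => ENNReal.ofReal (Real.exp (-f x)) / Zf))
    (γ : Measure (EuclideanSpace ℝ (Fin d)))
    (hγ : γ = (volume : Measure (EuclideanSpace ℝ (Fin d))).withDensity
      (fun v => ENNReal.ofReal ((2 * π) ^ (-(d : ℝ) / 2) * Real.exp (-‖v‖ ^ 2 / 2)))) :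
    (πx.prod γ).map φ = πx.prod γ ∧
    (πx.prod γ).map (fun z => (φ z).1) = πx := by
  set c : ℝ := (2 * π) ^ (-(d : ℝ) / 2)
  set g : EuclideanSpace ℝ (Fin d) × EuclideanSpace ℝ (Fin d) → ℝ≥0∞ := fun z =>
    ENNReal.ofReal (exp (-f z.1)) / Zf * ENNReal.ofReal (c * exp (-‖z.2‖ ^ 2 / 2))
  have hg : Measurable g := by unfold g; fun_prop
  have hg_eq_energy : ∀ z, g z = ENNReal.ofReal (exp (-H z)) * (ENNReal.ofReal c / Zf) := by
    intro z
    have hc : 0 ≤ c := by positivity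
    simp only [g]
    rw [hH, neg_add, ← neg_div, exp_add, ENNReal.ofReal_mul (exp_nonneg _),
      ENNReal.ofReal_mul hc]
    simp only [div_eq_mul_inv]
    ring
  have hprod : πx.prod γ = volume.withDensity g := by
    rw [hπx, hγ, prod_withDensity (by fun_prop) (by fun_prop), Measure.volume_eq_prod]
  have hγ_prob : IsProbabilityMeasure γ := ⟨by
    rw [hγ, withDensity_apply _ .univ, Measure.restrict_univ]
    simpa using lintegral_ofReal_stdGaussianPDF (EuclideanSpace ℝ (Fin d))⟩
  have hinv : MeasurePreserving φ (πx.prod γ) (πx.prod γ) :=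
    hprod ▸ hφ.withDensity_of_comp_eq hg fun z => by simp only [hg_eq_energy, hHφ]
  exact ⟨hinv.map_eq, (measurePreserving_fst.comp hinv).map_eq⟩

/-- Stationarity of the target density for idealized HMC: if `φ` preserves the
Lebesgue measure on phase space and conserves `H (x, v) = f x + ‖v‖²/2`, then
`φ` leaves the Gibbs measure `π_x ⊗ N(0, I_d)` invariant; in particular the
position marginal of one HMC step started from `π_x ⊗ N(0, I_d)` is `π_x`. -/
theorem hmc_preserves_target (d : ℕ) (hd : 0 < d)
    (f : EuclideanSpace ℝ (Fin d) → ℝ) (hf : Measurable f)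
    (Zf : ℝ≥0∞) (hZf : Zf = ∫⁻ x, ENNReal.ofReal (Real.exp (-f x)) ∂(volume))
    (hZf0 : 0 < Zf) (hZftop : Zf < ⊤)
    (H : EuclideanSpace ℝ (Fin d) × EuclideanSpace ℝ (Fin d) → ℝ)
    (hH : ∀ x v, H (x, v) = f x + ‖v‖ ^ 2 / 2)
    (φ : EuclideanSpace ℝ (Fin d) × EuclideanSpace ℝ (Fin d) →
      EuclideanSpace ℝ (Fin d) × EuclideanSpace ℝ (Fin d))
    (hφ : MeasurePreserving φ volume volume)
    (hHφ : ∀ z, H (φ z) = H z)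
    (πx : Measure (EuclideanSpace ℝ (Fin d)))
    (hπx : πx = (volume : Measure (EuclideanSpace ℝ (Fin d))).withDensity
      (fun x => ENNReal.ofReal (Real.exp (-f x)) / Zf))
    (γ : Measure (EuclideanSpace ℝ (Fin d)))
    (hγ : γ = (volume : Measure (EuclideanSpace ℝ (Fin d))).withDensity
      (fun v => ENNReal.ofReal ((2 * π) ^ (-(d : ℝ) / 2) * Real.exp (-‖v‖ ^ 2 / 2)))) :
    (πx.prod γ).map φ = πx.prod γ ∧
    (πx.prod γ).map (fun z => (φ z).1) = πx :=
  hmc_preserves_target_general d f hf Zf H hH φ hφ hHφ πx hπx γ hγ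
end
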